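/- Let P, Q be nonzero coprime polynomials over F_q with deg P > deg Q ≥ 1, let r = deg P − deg Q, n = deg Q, and set Y = ⋃_{i=1}^{∞} [q^{−r·i−n}, q^{−r·i}) ⊂ ℝ. Let α ∈ F_q((X^{-1})) have P/Q-digit expansion with digit string (s_i)_{i ≤ k}. Then: there exists i₀ such that for all i ≥ i₀, |{α·(P/Q)^i}| ∈ Y ∪ {0}, if and only if the digit string of α is eventually minimal (i.e., deg s_{−i} < deg Q for all sufficiently large i) — where for α ≠ 0, {·} denotes the fractional part in F_q((X^{-1})) and |β| = q^{deg β} (with |0| = 0). -/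

import Mathlib

open Polynomial
open scoped Classical

/-- Embedding of `F_q[X]` into `F_q((X⁻¹))`, modelled as Laurent series
(`HahnSeries ℤ Fq`) in `t = X⁻¹`: the monomial `X^i` goes to `t^{-i}`. -/
noncomputable def polyToLS {Fq : Type*} [Field Fq] (p : Polynomial Fq) :
    LaurentSeries Fq :=
  ∑ i ∈ p.support, HahnSeries.single (-(i : ℤ)) (p.coeff i)

/-- The induced embedding of `F_q(X)` into `F_q((X⁻¹))`. -/
noncomputable def ratToLS {Fq : Type*} [Field Fq] (f : RatFunc Fq) :
    LaurentSeries Fq :=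
  polyToLS f.num / polyToLS f.denom

/-- The partial sum `∑_{i=-t}^{k} (s_i/Q)(P/Q)^i ∈ F_q(X)` of a digit string. -/
noncomputable def digitPartialSum {Fq : Type*} [Field Fq] (P Q : Polynomial Fq)
    (s : ℤ → Polynomial Fq) (k : ℤ) (t : ℕ) : RatFunc Fq :=
  ∑ i ∈ Finset.Icc (-(t : ℤ)) k,
    (algebraMap (Polynomial Fq) (RatFunc Fq) (s i) /
      algebraMap (Polynomial Fq) (RatFunc Fq) Q) *
    ((algebraMap (Polynomial Fq) (RatFunc Fq) P) /
      (algebraMap (Polynomial Fq) (RatFunc Fq) Q)) ^ i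

/-- The fractional part `{β} = ∑_{j ≤ -1} β_j X^j` of `β ∈ F_q((X⁻¹))`: in the
variable `t = X⁻¹` this keeps exactly the coefficients of `t^e` with `e ≥ 1`. -/
noncomputable def lsFrac {Fq : Type*} [Field Fq] (β : LaurentSeries Fq) :
    LaurentSeries Fq :=
  ⟨fun e => if 1 ≤ e then β.coeff e else 0, by
    apply β.isPWO_support'.mono
    intro e he
    by_cases h : (1 : ℤ) ≤ e
    · simpa [Function.mem_support, h] using he
    · simp [Function.mem_support, h] at he⟩

/-- The absolute value `|β| = q^{deg β}` (with `|0| = 0`) on `F_q((X⁻¹))`; in the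
variable `t = X⁻¹` the degree is `-order`. -/
noncomputable def lsAbs {Fq : Type*} [Field Fq] (q : ℕ) (β : LaurentSeries Fq) : ℝ :=
  if β = 0 then 0 else (q : ℝ) ^ (-β.order)

/-- The set `Y_{P/Q} = ⋃_{i≥1} [q^{-r·i-n}, q^{-r·i}) ⊆ ℝ`. -/
def mahlerY (q : ℕ) (r n : ℤ) : Set ℝ :=
  {x : ℝ | ∃ i : ℕ, 1 ≤ i ∧ (q : ℝ) ^ (-(r * i) - n) ≤ x ∧ x < (q : ℝ) ^ (-(r * i))}

/-!
Let `ε_i = {α (P/Q)^i}`. In terms of the digits, `ε_i` is the tail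
`(P/Q)^i (α - ∑_{j ≥ -i} (s_j/Q)(P/Q)^j)`; it satisfies `|ε_i| < 1` and the recursion
`ε_i = s_{-i-1}/P + (Q/P) ε_{i+1}`, whose second summand has absolute value `< q^{-r}`.
So a digit with `deg s_{-i-1} ≥ deg Q` forces `|ε_i| = |s_{-i-1}/P| ∈ [q^{-r}, 1)`, which avoids
`Y ∪ {0}`. Conversely, if all digits from some point on have degree `< deg Q`, then every
`|ε_i|` is `< q^{-r}`. This suffices when `r ≤ n`, as then `Y = (0, q^{-r})`; when `n < r`, the
first nonzero summand `(Q/P)^m s/P` of the expansion of `ε_i` dominates, so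
`|ε_i| = q^{-r m} |s/P|` with `|s/P| ∈ [q^{-r-n}, q^{-r})`.
-/

open Filter

section Embedding

variable {K : Type*} [Field K]

lemma polyToLS_eq_aeval (p : K[X]) :
    polyToLS p = aeval (HahnSeries.single (-1 : ℤ) (1 : K)) p := by
  rw [aeval_def, eval₂_eq_sum, Polynomial.sum_def, polyToLS]
  refine Finset.sum_congr rfl fun i _ => ?_
  simp [HahnSeries.algebraMap_apply', HahnSeries.single_pow]

lemma coeff_polyToLS (p : K[X]) (e : ℤ) :
    (polyToLS p).coeff e = if e ≤ 0 then p.coeff (-e).toNat else 0 := by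
  rw [polyToLS, HahnSeries.coeff_sum]
  simp only [HahnSeries.coeff_single]
  split_ifs with he
  · obtain ⟨j, rfl⟩ : ∃ j : ℕ, e = -j := ⟨(-e).toNat, by omega⟩
    rw [Finset.sum_eq_single j]
    · simp
    · intro b _ hb
      rw [if_neg]
      omega
    · intro hj
      simp [notMem_support_iff.mp hj]
  · exact Finset.sum_eq_zero fun b _ => if_neg (by omega)

lemma orderTop_polyToLS {p : K[X]} (hp : p ≠ 0) :
    (polyToLS p).orderTop = ((-p.natDegree : ℤ) : WithTop ℤ) := by
  refine HahnSeries.orderTop_eq_of_le ?_ fun e he => ?_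
  · rw [HahnSeries.mem_support, coeff_polyToLS, if_pos (by omega)]
    simpa using hp
  · rw [HahnSeries.mem_support, coeff_polyToLS] at he
    split_ifs at he with he0
    · have := le_natDegree_of_ne_zero he
      omega
    · exact absurd rfl he

lemma polyToLS_ne_zero {p : K[X]} (hp : p ≠ 0) : polyToLS p ≠ 0 := by
  rw [← HahnSeries.orderTop_ne_top, orderTop_polyToLS hp]
  exact WithTop.coe_ne_top

noncomputable def ratToLSHom : RatFunc K →+* LaurentSeries K :=
  RatFunc.liftRingHom (aeval (HahnSeries.single (-1 : ℤ) (1 : K))).toRingHom fun p hp => by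
    rw [mem_nonZeroDivisors_iff_ne_zero] at hp
    rw [Submonoid.mem_comap, mem_nonZeroDivisors_iff_ne_zero]
    simpa [← polyToLS_eq_aeval] using polyToLS_ne_zero hp

lemma coe_ratToLSHom : ⇑(ratToLSHom : RatFunc K →+* LaurentSeries K) = ratToLS := by
  funext f
  simp [ratToLSHom, RatFunc.liftRingHom_apply, ratToLS, polyToLS_eq_aeval]

lemma ratToLSHom_algebraMap (p : K[X]) :
    ratToLSHom (algebraMap K[X] (RatFunc K) p) = polyToLS p := by
  simp [ratToLSHom, polyToLS_eq_aeval]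

lemma orderTop_ratToLSHom_div {u v : K[X]} (hu : u ≠ 0) (hv : v ≠ 0) :
    (ratToLSHom (algebraMap K[X] (RatFunc K) u / algebraMap K[X] (RatFunc K) v)).orderTop =
      ((v.natDegree : ℤ) - u.natDegree : ℤ) := by
  rw [map_div₀, ratToLSHom_algebraMap, ratToLSHom_algebraMap]
  have hquot : polyToLS u / polyToLS v ≠ 0 :=
    div_ne_zero (polyToLS_ne_zero hu) (polyToLS_ne_zero hv)
  obtain ⟨z, hz⟩ := WithTop.ne_top_iff_exists.mp (HahnSeries.orderTop_ne_top.mpr hquot)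
  have hmul := congrArg HahnSeries.orderTop (div_mul_cancel₀ (polyToLS u) (polyToLS_ne_zero hv))
  rw [HahnSeries.orderTop_mul, ← hz, orderTop_polyToLS hu, orderTop_polyToLS hv,
    ← WithTop.coe_add, WithTop.coe_inj] at hmul
  rw [← hz, WithTop.coe_inj]
  omega

lemma natDegree_sub_lt_orderTop_ratToLSHom_div_iff (u : K[X]) {v w : K[X]} (hv : v ≠ 0)
    (hw : w ≠ 0) :
    (((v.natDegree : ℤ) - w.natDegree : ℤ) : WithTop ℤ) <
        (ratToLSHom (algebraMap K[X] (RatFunc K) u / algebraMap K[X] (RatFunc K) v)).orderTop ↔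
      u.degree < w.degree := by
  rcases eq_or_ne u 0 with rfl | hu
  · simp only [map_zero, zero_div, HahnSeries.orderTop_zero, WithTop.coe_lt_top, degree_zero,
      true_iff]
    exact bot_lt_iff_ne_bot.mpr (degree_ne_bot.mpr hw)
  · rw [orderTop_ratToLSHom_div hu hv, WithTop.coe_lt_coe, ← natDegree_lt_natDegree_iff hu]
    omega

lemma orderTop_ratToLSHom_div_le (u : K[X]) {v : K[X]} (hv : v ≠ 0)
    (hne : ratToLSHom (algebraMap K[X] (RatFunc K) u / algebraMap K[X] (RatFunc K) v) ≠ 0) :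
    (ratToLSHom (algebraMap K[X] (RatFunc K) u / algebraMap K[X] (RatFunc K) v)).orderTop ≤
      (v.natDegree : ℤ) := by
  have hu : u ≠ 0 := fun hu => hne (by simp [hu])
  rw [orderTop_ratToLSHom_div hu hv, WithTop.coe_le_coe]
  omega

end Embedding

section FractionalPart

variable {K : Type*} [Field K]

lemma coeff_lsFrac (x : LaurentSeries K) (e : ℤ) :
    (lsFrac x).coeff e = if 1 ≤ e then x.coeff e else 0 := rfl

lemma lsFrac_add (x y : LaurentSeries K) : lsFrac (x + y) = lsFrac x + lsFrac y := by
  ext e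
  simp only [coeff_lsFrac, HahnSeries.coeff_add]
  split_ifs <;> simp

lemma lsFrac_eq_self {x : LaurentSeries K} (hx : 0 < x.orderTop) : lsFrac x = x := by
  ext e
  rw [coeff_lsFrac, ite_eq_left_iff, not_le]
  refine fun he => (HahnSeries.coeff_eq_zero_of_lt_orderTop ?_).symm
  exact lt_of_le_of_lt (WithTop.coe_le_coe.mpr (by omega)) hx

lemma lsFrac_polyToLS (p : K[X]) : lsFrac (polyToLS p) = 0 := by
  ext e
  rw [coeff_lsFrac, coeff_polyToLS]
  split_ifs <;> first | omega | rfl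

end FractionalPart

def IsMahlerOrder (r n o : ℤ) : Prop :=
  ∃ m : ℕ, 1 ≤ m ∧ r * m < o ∧ o ≤ r * m + n

namespace IsMahlerOrder

variable {r n o : ℤ}

lemma of_lt_of_le (h₁ : r < o) (h₂ : o ≤ r + n) : IsMahlerOrder r n o :=
  ⟨1, le_rfl, by simpa using h₁, by simpa using h₂⟩

lemma add_left (h : IsMahlerOrder r n o) : IsMahlerOrder r n (r + o) := by
  obtain ⟨m, hm, h₁, h₂⟩ := h
  refine ⟨m + 1, by omega, ?_, ?_⟩ <;> push_cast <;> linarith [mul_add_one r (m : ℤ)]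

lemma of_le (hr : 0 < r) (hrn : r ≤ n) (ho : r < o) : IsMahlerOrder r n o := by
  have hdiv := Int.mul_ediv_add_emod (o - 1) r
  have hmod₀ := Int.emod_nonneg (o - 1) hr.ne'
  have hmod₁ := Int.emod_lt_of_pos (o - 1) hr
  have hm : 1 ≤ (o - 1) / r := by
    rw [Int.le_ediv_iff_mul_le hr]
    omega
  refine ⟨((o - 1) / r).toNat, by omega, ?_, ?_⟩ <;> rw [Int.toNat_of_nonneg (by omega)] <;>
    linarith

lemma lt (hr : 0 ≤ r) (h : IsMahlerOrder r n o) : r < o := by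
  obtain ⟨m, hm, h₁, -⟩ := h
  nlinarith

end IsMahlerOrder

lemma zpow_neg_mem_mahlerY_iff {q : ℕ} (hq : 1 < q) {r n : ℤ} (o : ℤ) :
    (q : ℝ) ^ (-o) ∈ mahlerY q r n ↔ IsMahlerOrder r n o := by
  have hq' : (1 : ℝ) < q := by exact_mod_cast hq
  simp only [mahlerY, Set.mem_ofPred_eq, zpow_le_zpow_iff_right₀ hq', zpow_lt_zpow_iff_right₀ hq',
    IsMahlerOrder]
  refine exists_congr fun m => and_congr_right fun _ => ?_
  constructor <;> rintro ⟨h₁, h₂⟩ <;> constructor <;> linarith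

lemma lsAbs_mem_mahlerY_union_zero_iff {K : Type*} [Field K] {q : ℕ} (hq : 1 < q) {r n : ℤ}
    (x : LaurentSeries K) :
    lsAbs q x ∈ mahlerY q r n ∪ {0} ↔ (x ≠ 0 → IsMahlerOrder r n x.order) := by
  rcases eq_or_ne x 0 with rfl | hx
  · simp [lsAbs]
  · have hpos : (0 : ℝ) < (q : ℝ) ^ (-x.order) := zpow_pos (by positivity) _
    rw [lsAbs, if_neg hx, Set.mem_union, Set.mem_singleton_iff, zpow_neg_mem_mahlerY_iff hq,
      or_iff_left hpos.ne']
    exact (imp_iff_right hx).symm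

lemma order_pos_of_orderTop_pos {R : Type*} [Zero R] {x : LaurentSeries R} (h : 0 < x.orderTop)
    (hx : x ≠ 0) : 0 < x.order := by
  rwa [← HahnSeries.order_eq_orderTop_of_ne_zero hx, WithTop.coe_pos] at h

section Recursion

variable {R : Type*} [Ring R] [NoZeroDivisors R] {c : LaurentSeries R}
  {a ε : ℕ → LaurentSeries R} {r n : ℤ}

lemma min_le_orderTop_of_eq_add_mul {b : WithTop ℤ} (hc : 0 ≤ c.orderTop)
    (ha : ∀ i, b ≤ (a i).orderTop) (hrec : ∀ i, ε i = a i + c * ε (i + 1)) (L i : ℕ) :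
    min b (c ^ L * ε (i + L)).orderTop ≤ (ε i).orderTop := by
  induction L generalizing i with
  | zero => simp
  | succ L ih =>
    have hnext : min b (c ^ (L + 1) * ε (i + (L + 1))).orderTop ≤ (c * ε (i + 1)).orderTop := by
      rw [pow_succ', mul_assoc, show i + (L + 1) = i + 1 + L by omega, HahnSeries.orderTop_mul c,
        HahnSeries.orderTop_mul c]
      rcases min_le_iff.mp (ih (i + 1)) with hb | hX
      · exact (min_le_left _ _).trans ((le_add_of_nonneg_left hc).trans (add_le_add le_rfl hb))
      · exact (min_le_right _ _).trans (add_le_add le_rfl hX)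
    rw [hrec i]
    exact (le_min ((min_le_left _ _).trans (ha i)) hnext).trans
      HahnSeries.min_orderTop_le_orderTop_add

lemma order_eq_add_order_succ (hc : c.orderTop = r) (hrec : ∀ i, ε i = a i + c * ε (i + 1))
    {j : ℕ} (ha : a j = 0) (hne : ε j ≠ 0) :
    ε (j + 1) ≠ 0 ∧ (ε j).order = r + (ε (j + 1)).order := by
  have hshift : ε j = c * ε (j + 1) := by rw [hrec j, ha, zero_add]
  have hne' : ε (j + 1) ≠ 0 := fun h => hne (by rw [hshift, h, mul_zero])
  have hc₀ : c ≠ 0 := HahnSeries.orderTop_ne_top.mp (hc ▸ WithTop.coe_ne_top)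
  have hcord : c.order = r := by
    exact_mod_cast (HahnSeries.order_eq_orderTop_of_ne_zero hc₀).trans hc
  exact ⟨hne', by rw [hshift, HahnSeries.order_mul hc₀ hne', hcord]⟩

lemma lt_orderTop_mul_succ (hc : c.orderTop = r) (hε : ∀ i, 0 < (ε i).orderTop) (i : ℕ) :
    (r : WithTop ℤ) < (c * ε (i + 1)).orderTop := by
  rw [HahnSeries.orderTop_mul, hc]
  simpa using WithTop.add_lt_add_left WithTop.coe_ne_top (hε (i + 1))

lemma lt_orderTop_of_lt (hc : c.orderTop = r) (hrec : ∀ i, ε i = a i + c * ε (i + 1))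
    (hε : ∀ i, 0 < (ε i).orderTop) {i : ℕ} (hi : r < (a i).orderTop) :
    (r : WithTop ℤ) < (ε i).orderTop := by
  rw [hrec i]
  exact (lt_min hi (lt_orderTop_mul_succ hc hε i)).trans_le
    HahnSeries.min_orderTop_le_orderTop_add

lemma isMahlerOrder_order_of_lt (hr : 0 < r) (hnr : n < r) (hc : c.orderTop = r)
    (hrec : ∀ i, ε i = a i + c * ε (i + 1)) (hε : ∀ i, 0 < (ε i).orderTop) {i₀ : ℕ}
    (hlt : ∀ j ≥ i₀, (r : WithTop ℤ) < (a j).orderTop)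
    (hle : ∀ j, a j ≠ 0 → (a j).orderTop ≤ (r + n : ℤ)) :
    ∀ j ≥ i₀, ε j ≠ 0 → IsMahlerOrder r n (ε j).order := by
  suffices h : ∀ N : ℕ, ∀ j ≥ i₀, ε j ≠ 0 → (ε j).order ≤ N → IsMahlerOrder r n (ε j).order from
    fun j hj hne => h _ j hj hne (Int.self_le_toNat _)
  intro N
  induction N with
  | zero =>
    intro j _ hne hN
    exact absurd hN (not_le.mpr (order_pos_of_orderTop_pos (hε j) hne))
  | succ N ih =>
    intro j hj hne hN
    by_cases ha : a j = 0
    · obtain ⟨hne', hord⟩ := order_eq_add_order_succ hc hrec ha hne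
      have hpos := order_pos_of_orderTop_pos (hε (j + 1)) hne'
      rw [hord] at hN ⊢
      exact (ih (j + 1) (by omega) hne' (by push_cast at hN; omega)).add_left
    · have hnext : ((r + n : ℤ) : WithTop ℤ) < (c * ε (j + 1)).orderTop := by
        rw [HahnSeries.orderTop_mul, hc, WithTop.coe_add]
        exact WithTop.add_lt_add_left WithTop.coe_ne_top ((WithTop.coe_lt_coe.mpr hnr).trans
          (lt_orderTop_of_lt hc hrec hε (hlt (j + 1) (by omega))))
      have heq : (ε j).orderTop = (a j).orderTop := by
        rw [hrec j]
        exact HahnSeries.orderTop_add_eq_left ((hle j ha).trans_lt hnext)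
      rw [← HahnSeries.order_eq_orderTop_of_ne_zero hne] at heq
      exact .of_lt_of_le (WithTop.coe_lt_coe.mp (heq ▸ hlt j hj))
        (WithTop.coe_le_coe.mp (heq ▸ hle j ha))

theorem eventually_isMahlerOrder_iff (hr : 0 < r) (hc : c.orderTop = r)
    (hrec : ∀ i, ε i = a i + c * ε (i + 1)) (hε : ∀ i, 0 < (ε i).orderTop)
    (hle : ∀ j, a j ≠ 0 → (a j).orderTop ≤ (r + n : ℤ)) :
    (∀ᶠ i in atTop, ε i ≠ 0 → IsMahlerOrder r n (ε i).order) ↔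
      ∀ᶠ i in atTop, (r : WithTop ℤ) < (a i).orderTop := by
  constructor
  · intro h
    filter_upwards [h] with i hi
    by_contra! hai
    have heq : (ε i).orderTop = (a i).orderTop := by
      rw [hrec i]
      exact HahnSeries.orderTop_add_eq_left (hai.trans_lt (lt_orderTop_mul_succ hc hε i))
    have hne : ε i ≠ 0 := by
      rw [← HahnSeries.orderTop_ne_top, heq]
      exact ne_top_of_le_ne_top WithTop.coe_ne_top hai
    have hlt := WithTop.coe_lt_coe.mpr ((hi hne).lt hr.le)
    rw [HahnSeries.order_eq_orderTop_of_ne_zero hne, heq] at hlt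
    exact absurd hai (not_le.mpr hlt)
  · intro h
    obtain ⟨i₀, hi₀⟩ := Filter.eventually_atTop.mp h
    refine Filter.eventually_atTop.mpr ⟨i₀, fun i hi hne => ?_⟩
    rcases le_or_gt r n with hrn | hnr
    · refine .of_le hr hrn ?_
      rw [← WithTop.coe_lt_coe, HahnSeries.order_eq_orderTop_of_ne_zero hne]
      exact lt_orderTop_of_lt hc hrec hε (hi₀ i hi)
    · exact isMahlerOrder_order_of_lt hr hnr hc hrec hε hi₀ hle i hi hne

end Recursion

lemma inv_pow_mul_zpow_add {G : Type*} [CommGroupWithZero G] {x : G} (hx : x ≠ 0) (L i : ℕ) :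
    x⁻¹ ^ L * x ^ ((i + L : ℕ) : ℤ) = x ^ (i : ℤ) := by
  rw [Nat.cast_add, zpow_add₀ hx, zpow_natCast, zpow_natCast, inv_pow, mul_comm,
    mul_assoc, mul_inv_cancel₀ (pow_ne_zero _ hx), mul_one]

section DigitTail

variable {K : Type*} [Field K] (P Q : K[X]) (s : ℤ → K[X]) (k : ℤ) (α : LaurentSeries K)

local notation "ι" => algebraMap K[X] (RatFunc K)

/-- The fractional part `{α (P/Q)^i}` (see `lsFrac_ratToLS_mul_eq_digitTail`). -/
noncomputable def digitTail (i : ℕ) : LaurentSeries K :=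
  ratToLSHom ((ι P / ι Q) ^ (i : ℤ)) * (α - ratToLSHom (digitPartialSum P Q s k i))

variable {P Q s k}

lemma ratio_ne_zero (hP : P ≠ 0) (hQ : Q ≠ 0) : ι P / ι Q ≠ 0 :=
  div_ne_zero (RatFunc.algebraMap_ne_zero hP) (RatFunc.algebraMap_ne_zero hQ)

lemma digitPartialSum_succ (htop : ∀ i, k < i → s i = 0) (t : ℕ) :
    digitPartialSum P Q s k (t + 1) =
      digitPartialSum P Q s k t + ι (s (-t - 1)) / ι Q * (ι P / ι Q) ^ (-(t : ℤ) - 1) := by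
  rcases le_or_gt (-(t : ℤ) - 1) k with hk | hk
  · have hIcc : Finset.Icc (-((t + 1 : ℕ) : ℤ)) k =
        insert (-(t : ℤ) - 1) (Finset.Icc (-(t : ℤ)) k) := by
      ext x
      simp only [Finset.mem_Icc, Finset.mem_insert]
      omega
    rw [digitPartialSum, digitPartialSum, hIcc, Finset.sum_insert (by simp), add_comm]
  · rw [digitPartialSum, digitPartialSum, Finset.Icc_eq_empty_of_lt (by omega),
      Finset.Icc_eq_empty_of_lt (by omega), htop _ hk]
    simp

lemma digitTail_eq_add_mul (hP : P ≠ 0) (hQ : Q ≠ 0) (htop : ∀ i, k < i → s i = 0) (i : ℕ) :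
    digitTail P Q s k α i =
      ratToLSHom (ι (s (-i - 1)) / ι P) + ratToLSHom (ι Q / ι P) * digitTail P Q s k α (i + 1) := by
  have hF := ratio_ne_zero hP hQ
  have hshift := congrArg ratToLSHom (inv_pow_mul_zpow_add hF 1 i)
  have hdigit : (ι P / ι Q) ^ (i : ℤ) * (ι (s (-i - 1)) / ι Q * (ι P / ι Q) ^ (-(i : ℤ) - 1)) =
      ι (s (-i - 1)) / ι P := by
    rw [zpow_sub_one₀ hF, zpow_neg, mul_left_comm, mul_inv_cancel_left₀ (zpow_ne_zero _ hF),
      inv_div, div_mul_div_cancel₀ (RatFunc.algebraMap_ne_zero hQ)]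
  rw [inv_div, pow_one] at hshift
  simp only [digitTail, digitPartialSum_succ htop, map_add, map_mul, ← hdigit, ← hshift]
  ring

lemma pow_mul_digitTail (hP : P ≠ 0) (hQ : Q ≠ 0) (L i : ℕ) :
    ratToLSHom (ι Q / ι P) ^ L * digitTail P Q s k α (i + L) =
      ratToLSHom ((ι P / ι Q) ^ (i : ℤ)) * (α - ratToLSHom (digitPartialSum P Q s k (i + L))) := by
  have hF := ratio_ne_zero hP hQ
  rw [digitTail, ← mul_assoc, ← map_pow, ← map_mul, ← inv_div, inv_pow_mul_zpow_add hF]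

lemma orderTop_digitTail_pos (hP : P ≠ 0) (hQ : Q ≠ 0) (hdeg : Q.degree < P.degree)
    (hdig : ∀ i, (s i).degree < P.degree) (htop : ∀ i, k < i → s i = 0)
    (hconv : ∀ N : ℤ, ∃ T : ℕ, ∀ t : ℕ, T ≤ t → ∀ e : ℤ, e ≤ N →
      (α - ratToLS (digitPartialSum P Q s k t)).coeff e = 0) (i : ℕ) :
    0 < (digitTail P Q s k α i).orderTop := by
  have hc : 0 ≤ (ratToLSHom (ι Q / ι P)).orderTop := by
    rw [orderTop_ratToLSHom_div hQ hP, ← WithTop.coe_zero, WithTop.coe_le_coe]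
    have := natDegree_lt_natDegree hQ hdeg
    omega
  have ha (j : ℕ) : 1 ≤ (ratToLSHom (ι (s (-j - 1)) / ι P)).orderTop := by
    rcases eq_or_ne (s (-j - 1)) 0 with hs | hs
    · simp [hs]
    · rw [orderTop_ratToLSHom_div hs hP, ← WithTop.coe_one, WithTop.coe_le_coe]
      have := natDegree_lt_natDegree hs (hdig _)
      omega
  obtain ⟨z, hz⟩ := WithTop.ne_top_iff_exists.mp <| HahnSeries.orderTop_ne_top.mpr <|
    (_root_.map_ne_zero ratToLSHom).mpr <| zpow_ne_zero (i : ℤ) (ratio_ne_zero hP hQ)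
  obtain ⟨T, hT⟩ := hconv (-z)
  have hrest : ((1 - z : ℤ) : WithTop ℤ) ≤
      (α - ratToLSHom (digitPartialSum P Q s k (i + T))).orderTop := by
    rw [HahnSeries.le_orderTop_iff_forall, coe_ratToLSHom]
    intro e he
    exact hT _ (by omega) e (by have := WithTop.coe_lt_coe.mp he; omega)
  have hfar : 1 ≤ (ratToLSHom (ι Q / ι P) ^ T * digitTail P Q s k α (i + T)).orderTop := by
    rw [pow_mul_digitTail α hP hQ, HahnSeries.orderTop_mul, ← hz]
    calc (1 : WithTop ℤ) = ((z + (1 - z) : ℤ) : WithTop ℤ) := by norm_num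
      _ ≤ _ := by rw [WithTop.coe_add]; exact add_le_add le_rfl hrest
  exact zero_lt_one.trans_le <| (le_min le_rfl hfar).trans <|
    min_le_orderTop_of_eq_add_mul hc ha (digitTail_eq_add_mul α hP hQ htop) T i

lemma lsFrac_ratToLS_mul_eq_digitTail
    (hW : ∀ t : ℕ, ∃ w : K[X], ι w = (ι P / ι Q) ^ (t : ℤ) * digitPartialSum P Q s k t)
    (hpos : ∀ i, 0 < (digitTail P Q s k α i).orderTop) (i : ℕ) :
    lsFrac (ratToLS ((ι P / ι Q) ^ (i : ℤ)) * α) = digitTail P Q s k α i := by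
  obtain ⟨w, hw⟩ := hW i
  have hsplit : ratToLS ((ι P / ι Q) ^ (i : ℤ)) * α = polyToLS w + digitTail P Q s k α i := by
    rw [digitTail, ← ratToLSHom_algebraMap, hw, ← coe_ratToLSHom, map_mul]
    ring
  rw [hsplit, lsFrac_add, lsFrac_polyToLS, lsFrac_eq_self (hpos i), zero_add]

lemma eventually_natDegree_sub_lt_orderTop_iff (hP : P ≠ 0) (hQ : Q ≠ 0) :
    (∀ᶠ i : ℕ in atTop, (((P.natDegree : ℤ) - Q.natDegree : ℤ) : WithTop ℤ) <
      (ratToLSHom (ι (s (-i - 1)) / ι P)).orderTop) ↔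
      ∀ᶠ i : ℕ in atTop, (s (-(i : ℤ))).degree < Q.degree := by
  conv_rhs => rw [← map_add_atTop_eq_nat 1, eventually_map]
  simp only [natDegree_sub_lt_orderTop_ratToLSHom_div_iff _ hP hQ, Nat.cast_add, Nat.cast_one,
    neg_add']

end DigitTail

theorem pq_mahler_finite_fields_general (Fq : Type*) [Field Fq] [Fintype Fq]
    (P Q : Polynomial Fq) (hQ : Q ≠ 0)
    (hdeg : Q.degree < P.degree)
    (α : LaurentSeries Fq) (s : ℤ → Polynomial Fq) (k : ℤ)
    (hdig : ∀ i, (s i).degree < P.degree)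
    (htop : ∀ i, k < i → s i = 0)
    (hW : ∀ t : ℕ, ∃ w : Polynomial Fq,
      algebraMap (Polynomial Fq) (RatFunc Fq) w =
        ((algebraMap (Polynomial Fq) (RatFunc Fq) P) /
          (algebraMap (Polynomial Fq) (RatFunc Fq) Q)) ^ (t : ℤ) *
          digitPartialSum P Q s k t)
    (hconv : ∀ N : ℤ, ∃ T : ℕ, ∀ t : ℕ, T ≤ t → ∀ e : ℤ, e ≤ N →
      (α - ratToLS (digitPartialSum P Q s k t)).coeff e = 0) :
    (∃ i₀ : ℕ, ∀ i : ℕ, i₀ ≤ i →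
        lsAbs (Fintype.card Fq)
          (lsFrac (ratToLS (((algebraMap (Polynomial Fq) (RatFunc Fq) P) /
              (algebraMap (Polynomial Fq) (RatFunc Fq) Q)) ^ (i : ℤ)) * α)) ∈
          mahlerY (Fintype.card Fq)
            ((P.natDegree : ℤ) - (Q.natDegree : ℤ)) (Q.natDegree : ℤ) ∪ {0}) ↔
      (∃ i₀ : ℕ, ∀ i : ℕ, i₀ ≤ i → (s (-(i : ℤ))).degree < Q.degree) := by
  have hP : P ≠ 0 := ne_zero_of_degree_gt hdeg
  have hr : 0 < (P.natDegree : ℤ) - Q.natDegree := by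
    have := natDegree_lt_natDegree hQ hdeg
    omega
  have hpos := orderTop_digitTail_pos α hP hQ hdeg hdig htop hconv
  have hdichotomy := eventually_isMahlerOrder_iff (n := Q.natDegree) hr
    (orderTop_ratToLSHom_div hQ hP) (digitTail_eq_add_mul α hP hQ htop) hpos
    (fun j hj => by simpa using orderTop_ratToLSHom_div_le _ hP hj)
  simp only [lsFrac_ratToLS_mul_eq_digitTail α hW hpos,
    lsAbs_mem_mahlerY_union_zero_iff Fintype.one_lt_card]
  exact eventually_atTop.symm.trans
    (hdichotomy.trans ((eventually_natDegree_sub_lt_orderTop_iff hP hQ).trans eventually_atTop))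

/-- **Theorem (Mahler's problem for finite fields).** Let `α ∈ F_q((X⁻¹))` have
`P/Q`-digit expansion with digit string `(s_i)`. Then `|{α(P/Q)^i}| ∈ Y_{P/Q} ∪ {0}`
for all sufficiently large `i` if and only if the digit string is eventually minimal,
i.e. `deg s_{-i} < deg Q` for all sufficiently large `i`. -/
theorem pq_mahler_finite_fields (Fq : Type*) [Field Fq] [Fintype Fq]
    (P Q : Polynomial Fq) (hP : P ≠ 0) (hQ : Q ≠ 0) (hcop : IsCoprime P Q)
    (hdeg : Q.degree < P.degree) (hQdeg : 1 ≤ Q.degree)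
    (α : LaurentSeries Fq) (s : ℤ → Polynomial Fq) (k : ℤ)
    (hdig : ∀ i, (s i).degree < P.degree)
    (htop : ∀ i, k < i → s i = 0)
    (hW : ∀ t : ℕ, ∃ w : Polynomial Fq,
      algebraMap (Polynomial Fq) (RatFunc Fq) w =
        ((algebraMap (Polynomial Fq) (RatFunc Fq) P) /
          (algebraMap (Polynomial Fq) (RatFunc Fq) Q)) ^ (t : ℤ) *
          digitPartialSum P Q s k t)
    (hconv : ∀ N : ℤ, ∃ T : ℕ, ∀ t : ℕ, T ≤ t → ∀ e : ℤ, e ≤ N →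
      (α - ratToLS (digitPartialSum P Q s k t)).coeff e = 0) :
    (∃ i₀ : ℕ, ∀ i : ℕ, i₀ ≤ i →
        lsAbs (Fintype.card Fq)
          (lsFrac (ratToLS (((algebraMap (Polynomial Fq) (RatFunc Fq) P) /
              (algebraMap (Polynomial Fq) (RatFunc Fq) Q)) ^ (i : ℤ)) * α)) ∈
          mahlerY (Fintype.card Fq)
            ((P.natDegree : ℤ) - (Q.natDegree : ℤ)) (Q.natDegree : ℤ) ∪ {0}) ↔
      (∃ i₀ : ℕ, ∀ i : ℕ, i₀ ≤ i → (s (-(i : ℤ))).degree < Q.degree) :=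
  pq_mahler_finite_fields_general Fq P Q hQ hdeg α s k hdig htop hW hconv
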